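/- Let r ≥ 2 and let F be a family of r-graphs. For every δ > 0 there exists N₀ such that the following holds for all n ≥ N₀. If H is an F-free r-graph on n vertices with |H| ≥ (π(F)/r! − δ)·n^r, then the set Z_δ(H) := { v ∈ V(H) : d_H(v) ≤ (π(F)/(r−1)! − 4δ^{1/2})·n^{r−1} } has size at most δ^{1/2}·n. -/

import Mathlib

open scoped Classical

noncomputable section

/-- `Contains F H`: the hypergraph `H` contains a copy of `F` as a (not necessarily
induced) subgraph, i.e. there is an injection of vertices mapping edges to edges. -/
def Contains {α β : Type} [DecidableEq β] (F : Finset (Finset α))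
    (H : Finset (Finset β)) : Prop :=
  ∃ f : α → β, Function.Injective f ∧ ∀ e ∈ F, e.image f ∈ H

/-- `H` is `F`-free for a family `F` of hypergraphs: `H` contains no member of `F`. -/
def FamFree (F : Set (Σ m : ℕ, Finset (Finset (Fin m)))) {n : ℕ}
    (H : Finset (Finset (Fin n))) : Prop :=
  ∀ p ∈ F, ¬ Contains p.2 H

/-- `H` is `r`-uniform: every edge has exactly `r` vertices. -/
def IsUniform (r : ℕ) {n : ℕ} (H : Finset (Finset (Fin n))) : Prop :=
  ∀ e ∈ H, e.card = r

/-- The Turán number `ex(n, F)` for `r`-graphs: the maximum number of edges of an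
`F`-free `r`-uniform hypergraph on `n` vertices. -/
def exNum (r : ℕ) (F : Set (Σ m : ℕ, Finset (Finset (Fin m)))) (n : ℕ) : ℕ :=
  sSup {k : ℕ | ∃ H : Finset (Finset (Fin n)), IsUniform r H ∧ FamFree F H ∧ H.card = k}

/-- The Turán density `π(F) = inf_{n ≥ r} ex(n,F)/C(n,r)`, which equals the limit
`lim_{n→∞} ex(n,F)/C(n,r)` since the ratio is non-increasing in `n`. -/
def turanDensity (r : ℕ) (F : Set (Σ m : ℕ, Finset (Finset (Fin m)))) : ℝ :=
  sInf {x : ℝ | ∃ n : ℕ, r ≤ n ∧ x = (exNum r F n : ℝ) / (n.choose r : ℝ)}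

/-- The blowup of the `r`-graph `H` on `Fin m` along a map `g : Fin N → Fin m`
(the fibre of `g` over `v` is the set of clones of `v`): its edges are the `r`-sets
meeting `r` distinct fibres whose images form an edge of `H`. Every blowup of `H`
arises this way. -/
def blowup (r : ℕ) {m N : ℕ} (g : Fin N → Fin m) (H : Finset (Finset (Fin m))) :
    Finset (Finset (Fin N)) :=
  Finset.univ.filter (fun e : Finset (Fin N) =>
    e.card = r ∧ (e.image g).card = r ∧ e.image g ∈ H)

/-- The family `F` is blowup-invariant: every blowup of every `F`-free `r`-graph
is `F`-free. -/
def BlowupInvariant (r : ℕ) (F : Set (Σ m : ℕ, Finset (Finset (Fin m)))) : Prop :=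
  ∀ (m : ℕ) (H : Finset (Finset (Fin m))), IsUniform r H → FamFree F H →
    ∀ (N : ℕ) (g : Fin N → Fin m), FamFree F (blowup r g H)

/-- The degree of a vertex `v`: the number of edges of `H` containing `v`. -/
def degH {n : ℕ} (H : Finset (Finset (Fin n))) (v : Fin n) : ℕ :=
  (H.filter (fun e => v ∈ e)).card

/-- The maximum degree `Δ(H)`. -/
def maxDeg {n : ℕ} (H : Finset (Finset (Fin n))) : ℕ :=
  Finset.univ.sup (degH H)

/-- The minimum degree `δ(H)`. -/
def minDeg {n : ℕ} (H : Finset (Finset (Fin n))) : ℕ :=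
  sInf (Set.range (degH H))


/-! If more than `√δ n` vertices had small degree, delete `k = ⌈√δ n⌉` of them. What is left is
an `F`-free graph on `n - k` vertices; since `ex(m, F) / C(m, r)` decreases to `π(F)`, it has at
most about `π(F)/r! · (n - k)^r` edges. The deleted vertices carry fewer than
`k (π(F)/(r-1)! - 4√δ) n^(r-1)` edges, and `(1 - x)^r ≤ 1 - r x + C(r,2) x²` shows that the two
bounds together fall short of `(π(F)/r! - δ) n^r`. -/

section Turan

variable {F : Set (Σ m : ℕ, Finset (Finset (Fin m)))}

lemma Contains.mono {α β : Type} [DecidableEq β] {P : Finset (Finset α)}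
    {H H' : Finset (Finset β)} (h : H' ⊆ H) (hc : Contains P H') : Contains P H :=
  let ⟨f, hf, he⟩ := hc
  ⟨f, hf, fun e heP => h (he e heP)⟩

lemma FamFree.subset {n : ℕ} {H H' : Finset (Finset (Fin n))} (h : H' ⊆ H)
    (hH : FamFree F H) : FamFree F H' :=
  fun p hp hc => hH p hp (hc.mono h)

lemma IsUniform.subset {r n : ℕ} {H H' : Finset (Finset (Fin n))} (h : H' ⊆ H)
    (hH : IsUniform r H) : IsUniform r H' :=
  fun e he => hH e (h he)

lemma card_le_exNum {r n : ℕ} {H : Finset (Finset (Fin n))} (hu : IsUniform r H)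
    (hf : FamFree F H) : H.card ≤ exNum r F n :=
  le_csSup ⟨_, fun _ ⟨H', _, _, hk⟩ => hk ▸ Finset.card_le_univ H'⟩ ⟨H, hu, hf, rfl⟩

lemma card_le_exNum_of_subset_range {r a b : ℕ} {φ : Fin a → Fin b} (hφ : φ.Injective)
    {H : Finset (Finset (Fin b))} (hu : IsUniform r H) (hf : FamFree F H)
    (hrange : ∀ e ∈ H, ∀ v ∈ e, v ∈ Set.range φ) : H.card ≤ exNum r F a := by
  set G : Finset (Finset (Fin a)) := Finset.univ.filter (fun d => d.image φ ∈ H)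
  have hG : IsUniform r G := fun d hd => by
    rw [← Finset.card_image_of_injective d hφ]
    exact hu _ (Finset.mem_filter.1 hd).2
  have hfG : FamFree F G := fun p hp ⟨f, hf_inj, hfe⟩ =>
    hf p hp ⟨φ ∘ f, hφ.comp hf_inj, fun e he => by
      simpa [Finset.image_image] using (Finset.mem_filter.1 (hfe e he)).2⟩
  have hHG : H ⊆ G.image (Finset.image φ) := fun e he => by
    have hpre : (e.preimage φ hφ.injOn).image φ = e := by
      rw [Finset.image_preimage, Finset.filter_true_of_mem (hrange e he)]
    refine Finset.mem_image.2 ⟨_, Finset.mem_filter.2 ⟨Finset.mem_univ _, ?_⟩, hpre⟩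
    rwa [hpre]
  calc H.card ≤ G.card := (Finset.card_le_card hHG).trans Finset.card_image_le
    _ ≤ exNum r F a := card_le_exNum hG hfG

lemma exists_card_eq_exNum {r n : ℕ} (h : exNum r F n ≠ 0) :
    ∃ H : Finset (Finset (Fin n)), IsUniform r H ∧ FamFree F H ∧ H.card = exNum r F n := by
  set S := {k : ℕ | ∃ H : Finset (Finset (Fin n)), IsUniform r H ∧ FamFree F H ∧ H.card = k}
  have hS : S.Nonempty := Set.nonempty_iff_ne_empty.2 fun hS => h <| by
    change sSup S = 0
    rw [hS, csSup_empty]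
    rfl
  exact Nat.sSup_mem hS ⟨_, fun _ ⟨H', _, _, hk⟩ => hk ▸ Finset.card_le_univ H'⟩

lemma exNum_le_choose (r : ℕ) (F : Set (Σ m : ℕ, Finset (Finset (Fin m)))) (n : ℕ) :
    exNum r F n ≤ n.choose r := by
  refine csSup_le' ?_
  rintro k ⟨H, hu, -, rfl⟩
  simpa using Finset.card_le_card (fun e he => Finset.mem_powersetCard_univ.2 (hu e he) :
    H ⊆ Finset.powersetCard r Finset.univ)

/-- Deleting a vertex `v` leaves an `F`-free graph on `m` vertices, and each edge survives
exactly `m + 1 - r` of these deletions. -/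
lemma exNum_succ_mul_le (r : ℕ) (F : Set (Σ m : ℕ, Finset (Finset (Fin m)))) (m : ℕ) :
    (m + 1 - r) * exNum r F (m + 1) ≤ (m + 1) * exNum r F m := by
  rcases eq_or_ne (exNum r F (m + 1)) 0 with h0 | h0
  · simp [h0]
  obtain ⟨H, hu, hf, hcard⟩ := exists_card_eq_exNum h0
  have hdel : ∀ v : Fin (m + 1), (H.filter (fun e => v ∉ e)).card ≤ exNum r F m := fun v =>
    card_le_exNum_of_subset_range Fin.succAbove_right_injective
      (hu.subset (Finset.filter_subset _ _)) (hf.subset (Finset.filter_subset _ _))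
      fun e he w hw => Fin.exists_succAbove_eq fun hwv =>
        (Finset.mem_filter.1 he).2 (by rwa [hwv] at hw)
  have hcount : ∑ v : Fin (m + 1), (H.filter (fun e => v ∉ e)).card = H.card * (m + 1 - r) := by
    calc ∑ v : Fin (m + 1), (H.filter (fun e => v ∉ e)).card
        = ∑ e ∈ H, (Finset.univ.filter (fun v => v ∉ e)).card :=
          Finset.sum_card_bipartiteAbove_eq_sum_card_bipartiteBelow _
      _ = ∑ _e ∈ H, (m + 1 - r) := Finset.sum_congr rfl fun e he => by
          rw [Finset.filter_not, Finset.filter_mem_eq_inter, Finset.univ_inter,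
            ← Finset.compl_eq_univ_sdiff, Finset.card_compl, Fintype.card_fin, hu e he]
      _ = H.card * (m + 1 - r) := by rw [Finset.sum_const, smul_eq_mul]
  calc (m + 1 - r) * exNum r F (m + 1) = ∑ v : Fin (m + 1), (H.filter (fun e => v ∉ e)).card := by
        rw [hcount, hcard, mul_comm]
    _ ≤ ∑ _v : Fin (m + 1), exNum r F m := Finset.sum_le_sum fun v _ => hdel v
    _ = (m + 1) * exNum r F m := by simp

end Turan

lemma Nat.mul_pred_le_factorial (r : ℕ) : r * (r - 1) ≤ r.factorial := by
  rcases Nat.eq_zero_or_pos r with rfl | hr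
  · simp
  calc r * (r - 1) ≤ r * (r - 1).factorial := Nat.mul_le_mul_left r (Nat.self_le_factorial _)
    _ = r.factorial := Nat.mul_factorial_pred hr.ne'

section Density

variable (r : ℕ) (F : Set (Σ m : ℕ, Finset (Finset (Fin m))))

lemma exNum_div_choose_antitone {a b : ℕ} (hra : r ≤ a) (hab : a ≤ b) :
    (exNum r F b : ℝ) / b.choose r ≤ exNum r F a / a.choose r := by
  induction b, hab using Nat.le_induction with
  | base => exact le_rfl
  | succ m hm ih =>
    refine le_trans ?_ ih
    have hrm : r ≤ m := hra.trans hm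
    rw [div_le_div_iff₀ (mod_cast Nat.choose_pos (hrm.trans m.le_succ))
      (mod_cast Nat.choose_pos hrm)]
    have hpos : 0 < m + 1 - r := by omega
    suffices exNum r F (m + 1) * m.choose r ≤ exNum r F m * (m + 1).choose r by exact_mod_cast this
    refine Nat.le_of_mul_le_mul_left ?_ hpos
    calc (m + 1 - r) * (exNum r F (m + 1) * m.choose r)
        = (m + 1 - r) * exNum r F (m + 1) * m.choose r := by ring
      _ ≤ (m + 1) * exNum r F m * m.choose r := Nat.mul_le_mul_right _ (exNum_succ_mul_le r F m)
      _ = exNum r F m * (m.choose r * (m + 1)) := by ring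
      _ = (m + 1 - r) * (exNum r F m * (m + 1).choose r) := by rw [Nat.choose_mul_succ_eq]; ring

lemma turanDensity_nonneg : 0 ≤ turanDensity r F :=
  le_csInf ⟨_, r, le_rfl, rfl⟩ fun _ ⟨_, _, hx⟩ => hx ▸ by positivity

lemma turanDensity_le_one : turanDensity r F ≤ 1 := by
  have hle : turanDensity r F ≤ (exNum r F r : ℝ) / r.choose r :=
    csInf_le ⟨0, fun _ ⟨_, _, hx⟩ => hx ▸ by positivity⟩ ⟨r, le_rfl, rfl⟩
  have hex : (exNum r F r : ℝ) ≤ 1 := by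
    exact_mod_cast (exNum_le_choose r F r).trans (Nat.choose_self r).le
  rw [Nat.choose_self, Nat.cast_one, div_one] at hle
  exact hle.trans hex

lemma exists_forall_exNum_le {ε : ℝ} (hε : 0 < ε) : ∃ n₁ : ℕ, ∀ m ≥ n₁,
    (exNum r F m : ℝ) ≤ (turanDensity r F / r.factorial + ε) * m ^ r := by
  have hfac : (0 : ℝ) < r.factorial := mod_cast r.factorial_pos
  obtain ⟨_, ⟨n₁, hrn₁, rfl⟩, hlt⟩ := exists_lt_of_csInf_lt
    (s := {x : ℝ | ∃ n : ℕ, r ≤ n ∧ x = (exNum r F n : ℝ) / (n.choose r : ℝ)})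
    ⟨_, r, le_rfl, rfl⟩ (lt_add_of_pos_right (turanDensity r F) (mul_pos hε hfac))
  refine ⟨n₁, fun m hm => ?_⟩
  have hchoose : (0 : ℝ) < m.choose r := mod_cast Nat.choose_pos (hrn₁.trans hm)
  have hdens : (exNum r F m : ℝ) / m.choose r < turanDensity r F + ε * r.factorial :=
    (exNum_div_choose_antitone r F hrn₁ hm).trans_lt hlt
  calc (exNum r F m : ℝ) ≤ (turanDensity r F + ε * r.factorial) * m.choose r :=
        ((div_le_iff₀ hchoose).1 hdens.le)
    _ ≤ (turanDensity r F + ε * r.factorial) * (m ^ r / r.factorial) :=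
        mul_le_mul_of_nonneg_left (Nat.choose_le_pow_div r m)
          (by linarith [turanDensity_nonneg r F, mul_pos hε hfac])
    _ = (turanDensity r F / r.factorial + ε) * m ^ r := by field_simp

lemma turanDensity_div_factorial_mul_le_one :
    turanDensity r F / r.factorial * (r * (r - 1)) ≤ 1 := by
  obtain _ | r := r
  · simp
  have hq : ((r + 1 : ℕ) : ℝ) * ((r + 1 : ℕ) - 1) ≤ (r + 1).factorial := by
    have := Nat.mul_pred_le_factorial (r + 1)
    rw [Nat.add_sub_cancel] at this
    push_cast
    simpa using (Nat.cast_le (α := ℝ)).2 this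
  have hq0 : (0 : ℝ) ≤ ((r + 1 : ℕ) : ℝ) * ((r + 1 : ℕ) - 1) := by
    push_cast
    simp only [add_sub_cancel_right]
    positivity
  rw [div_mul_eq_mul_div, div_le_one (mod_cast (r + 1).factorial_pos)]
  nlinarith [turanDensity_le_one (r + 1) F]

end Density

def lowDegreeVertices {n : ℕ} (H : Finset (Finset (Fin n))) (θ : ℝ) : Finset (Fin n) :=
  Finset.univ.filter (fun v => (degH H v : ℝ) ≤ θ)

section Deletion

variable {F : Set (Σ m : ℕ, Finset (Finset (Fin m)))} {r n : ℕ} {H : Finset (Finset (Fin n))}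

lemma card_le_exNum_sdiff_add_sum_degH (hu : IsUniform r H) (hf : FamFree F H)
    (S : Finset (Fin n)) : H.card ≤ exNum r F (n - S.card) + ∑ v ∈ S, degH H v := by
  set H' := H.filter (fun e => Disjoint e S)
  have hcover : H ⊆ H' ∪ S.biUnion (fun v => H.filter (fun e => v ∈ e)) := fun e he => by
    by_cases hdisj : Disjoint e S
    · exact Finset.mem_union_left _ (Finset.mem_filter.2 ⟨he, hdisj⟩)
    · obtain ⟨v, hve, hvS⟩ := Finset.not_disjoint_iff.1 hdisj
      exact Finset.mem_union_right _ (Finset.mem_biUnion.2 ⟨v, hvS, Finset.mem_filter.2 ⟨he, hve⟩⟩)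
  have hcompl : Sᶜ.card = n - S.card := by rw [Finset.card_compl, Fintype.card_fin]
  have hH' : H'.card ≤ exNum r F (n - S.card) := by
    refine card_le_exNum_of_subset_range (Sᶜ.orderEmbOfFin hcompl).injective
      (hu.subset (Finset.filter_subset _ _)) (hf.subset (Finset.filter_subset _ _)) ?_
    intro e he v hv
    rw [Finset.range_orderEmbOfFin, Finset.coe_compl]
    exact Finset.disjoint_left.1 (Finset.mem_filter.1 he).2 hv
  calc H.card ≤ (H' ∪ S.biUnion (fun v => H.filter (fun e => v ∈ e))).card :=
        Finset.card_le_card hcover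
    _ ≤ H'.card + ∑ v ∈ S, degH H v :=
        (Finset.card_union_le _ _).trans (Nat.add_le_add_left Finset.card_biUnion_le _)
    _ ≤ exNum r F (n - S.card) + ∑ v ∈ S, degH H v := Nat.add_le_add_right hH' _

lemma card_le_exNum_sdiff_add_of_subset_lowDegreeVertices (hu : IsUniform r H)
    (hf : FamFree F H) {S : Finset (Fin n)} {θ : ℝ} (hS : S ⊆ lowDegreeVertices H θ) :
    (H.card : ℝ) ≤ exNum r F (n - S.card) + S.card * θ := by
  have hdeg : ∑ v ∈ S, (degH H v : ℝ) ≤ S.card * θ := by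
    simpa using Finset.sum_le_card_nsmul S _ θ fun v hv => (Finset.mem_filter.1 (hS hv)).2
  calc (H.card : ℝ) ≤ exNum r F (n - S.card) + ∑ v ∈ S, (degH H v : ℝ) := by
        exact_mod_cast card_le_exNum_sdiff_add_sum_degH hu hf S
    _ ≤ exNum r F (n - S.card) + S.card * θ := by linarith

end Deletion

lemma one_sub_pow_le_of_nonneg_of_le_one (r : ℕ) {x : ℝ} (hx0 : 0 ≤ x) (hx1 : x ≤ 1) :
    (1 - x) ^ r ≤ 1 - r * x + r * (r - 1) / 2 * x ^ 2 := by
  induction r with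
  | zero => simp
  | succ r ih =>
    have hC : 0 ≤ (r : ℝ) * (r - 1) / 2 * x ^ 3 := by
      rcases Nat.eq_zero_or_pos r with rfl | hr
      · simp
      have : (1 : ℝ) ≤ r := mod_cast hr
      have : 0 ≤ (r : ℝ) - 1 := by linarith
      positivity
    calc (1 - x) ^ (r + 1) = (1 - x) * (1 - x) ^ r := pow_succ' _ _
      _ ≤ (1 - x) * (1 - r * x + r * (r - 1) / 2 * x ^ 2) :=
          mul_le_mul_of_nonneg_left ih (by linarith)
      _ ≤ 1 - ((r + 1 : ℕ) : ℝ) * x + ((r + 1 : ℕ) : ℝ) * (((r + 1 : ℕ) : ℝ) - 1) / 2 * x ^ 2 := by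
          push_cast
          nlinarith

/-- The edge count of `card_lowDegreeVertices_le` divided by `n ^ r`, where `x = #S / n` is the
proportion of deleted vertices. -/
lemma one_sub_pow_deletion_lt {r : ℕ} (hr : 2 ≤ r) {p s x : ℝ} (hp : 0 ≤ p)
    (hpr : p * (r * (r - 1)) ≤ 1) (hs0 : 0 < s) (hs1 : s < 1) (hsx : s ≤ x) (hx2s : x ≤ 2 * s)
    (hx1 : x ≤ 1) :
    (p + s ^ 2 / (r * (r - 1))) * (1 - x) ^ r + x * (r * p - 4 * s) < p - s ^ 2 := by
  set q : ℝ := r * (r - 1) with hq_def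
  have hq : 2 ≤ q := by
    have : (2 : ℝ) ≤ r := mod_cast hr
    nlinarith
  have hε2 : s ^ 2 / q ≤ s ^ 2 / 2 := div_le_div_of_nonneg_left (by positivity) two_pos hq
  have hcoef : (p + s ^ 2 / q) * (q / 2) ≤ 1 := by
    rw [show (p + s ^ 2 / q) * (q / 2) = (p * q + s ^ 2) / 2 by field_simp]
    nlinarith
  -- `x² - 4 s x + 3 s² = (x - s) (x - 3 s) ≤ 0` for `s ≤ x ≤ 2 s`
  have hquad : x ^ 2 - 4 * s * x ≤ -3 * s ^ 2 := by nlinarith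
  have hx0 : 0 ≤ x := hs0.le.trans hsx
  calc (p + s ^ 2 / q) * (1 - x) ^ r + x * (r * p - 4 * s)
      ≤ (p + s ^ 2 / q) * (1 - r * x + q / 2 * x ^ 2) + x * (r * p - 4 * s) := by
        gcongr
        simpa [hq_def, mul_div_assoc] using one_sub_pow_le_of_nonneg_of_le_one r hx0 hx1
    _ = p + s ^ 2 / q - s ^ 2 / q * r * x + (p + s ^ 2 / q) * (q / 2) * x ^ 2 - 4 * s * x := by
        ring
    _ ≤ p + s ^ 2 / 2 + x ^ 2 - 4 * s * x := by
        have : 0 ≤ s ^ 2 / q * r * x := by positivity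
        nlinarith
    _ < p - s ^ 2 := by nlinarith

lemma card_lowDegreeVertices_le {F : Set (Σ m : ℕ, Finset (Finset (Fin m)))} {r n n₁ : ℕ}
    (hr : 2 ≤ r) {p s : ℝ} (hp : 0 ≤ p) (hpr : p * (r * (r - 1)) ≤ 1) (hs0 : 0 < s)
    (hs1 : s < 1) (hex : ∀ m ≥ n₁, (exNum r F m : ℝ) ≤ (p + s ^ 2 / (r * (r - 1))) * m ^ r)
    (hn₁ : (n₁ : ℝ) + 1 ≤ (1 - s) * n) (hsn : 1 ≤ s * n) {H : Finset (Finset (Fin n))}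
    (hu : IsUniform r H) (hf : FamFree F H) (hH : (p - s ^ 2) * n ^ r ≤ H.card) :
    ((lowDegreeVertices H ((r * p - 4 * s) * n ^ (r - 1))).card : ℝ) ≤ s * n := by
  by_contra! hZ
  have hn : (0 : ℝ) < n := by nlinarith
  obtain ⟨S, hSZ, hS⟩ := Finset.exists_subset_card_eq (Nat.ceil_le.2 hZ.le)
  have hSlo : s * n ≤ S.card := hS ▸ Nat.le_ceil _
  have hShi : (S.card : ℝ) < s * n + 1 := hS ▸ Nat.ceil_lt_add_one (by positivity)
  have hSn : S.card ≤ n := by simpa using Finset.card_le_univ S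
  have hrest : ((n - S.card : ℕ) : ℝ) = (1 - S.card / n) * n := by
    rw [Nat.cast_sub hSn]
    field_simp
  have hdeleted : n₁ ≤ n - S.card := by
    have : (n₁ : ℝ) < ((n - S.card : ℕ) : ℝ) := by rw [Nat.cast_sub hSn]; linarith
    exact_mod_cast this.le
  have hpow : (n : ℝ) ^ r = n * n ^ (r - 1) := by rw [← pow_succ', Nat.sub_add_cancel (by omega)]
  have hlt := one_sub_pow_deletion_lt hr hp hpr hs0 hs1 (x := S.card / n)
    ((le_div_iff₀ hn).2 hSlo) ((div_le_iff₀ hn).2 (by linarith))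
    ((div_le_one hn).2 (mod_cast hSn))
  refine lt_irrefl ((p - s ^ 2) * n ^ r) ?_
  calc
    (p - s ^ 2) * n ^ r ≤ H.card := hH
    _ ≤ exNum r F (n - S.card) + S.card * ((r * p - 4 * s) * n ^ (r - 1)) :=
        card_le_exNum_sdiff_add_of_subset_lowDegreeVertices hu hf hSZ
    _ ≤ (p + s ^ 2 / (r * (r - 1))) * ((n - S.card : ℕ) : ℝ) ^ r
          + S.card * ((r * p - 4 * s) * n ^ (r - 1)) := by gcongr; exact hex _ hdeleted
    _ = ((p + s ^ 2 / (r * (r - 1))) * (1 - S.card / n) ^ r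
          + S.card / n * (r * p - 4 * s)) * n ^ r := by
        rw [hrest, mul_pow, hpow]
        field_simp
    _ < (p - s ^ 2) * n ^ r := by gcongr

/-- **Fact (few vertices of small degree in near-extremal hypergraphs).** Let `r ≥ 2`
and let `F` be a family of `r`-graphs. For every `δ > 0` there is `N₀` such that every
`F`-free `r`-graph on `n ≥ N₀` vertices with at least `(π(F)/r! − δ)·n^r` edges has at
most `δ^{1/2}·n` vertices of degree at most `(π(F)/(r−1)! − 4δ^{1/2})·n^{r−1}`. -/
theorem few_small_degree_vertices (r : ℕ) (hr : 2 ≤ r)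
    (F : Set (Σ m : ℕ, Finset (Finset (Fin m)))) (δ : ℝ) (hδ : 0 < δ) :
    ∃ N₀ : ℕ, ∀ n : ℕ, N₀ ≤ n →
      ∀ H : Finset (Finset (Fin n)), IsUniform r H → FamFree F H →
        (turanDensity r F / (r.factorial : ℝ) - δ) * (n : ℝ) ^ r ≤ (H.card : ℝ) →
        ((Finset.univ.filter (fun v : Fin n =>
            (degH H v : ℝ) ≤
              (turanDensity r F / ((r - 1).factorial : ℝ) - 4 * Real.sqrt δ)
                * (n : ℝ) ^ (r - 1))).card : ℝ)
          ≤ Real.sqrt δ * (n : ℝ) := by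
  rcases le_or_gt 1 δ with hδ1 | hδ1
  · refine ⟨0, fun n _ H _ _ _ => ?_⟩
    calc _ ≤ (n : ℝ) := by exact_mod_cast (Finset.card_filter_le _ _).trans (by simp)
      _ ≤ Real.sqrt δ * n := le_mul_of_one_le_left n.cast_nonneg (Real.one_le_sqrt.2 hδ1)
  set s := Real.sqrt δ
  have hs0 : 0 < s := Real.sqrt_pos.2 hδ
  have hs1 : s < 1 := (Real.sqrt_lt' one_pos).2 (by rwa [one_pow])
  have hδs : δ = s ^ 2 := (Real.sq_sqrt hδ.le).symm
  have hrp : turanDensity r F / (r - 1).factorial = r * (turanDensity r F / r.factorial) := by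
    rw [← Nat.mul_factorial_pred (by omega : r ≠ 0)]
    push_cast
    field_simp
  have hq : (0 : ℝ) < r * (r - 1) := by
    have : (2 : ℝ) ≤ r := mod_cast hr
    nlinarith
  obtain ⟨n₁, hex⟩ := exists_forall_exNum_le r F (ε := s ^ 2 / (r * (r - 1))) (by positivity)
  refine ⟨⌈((n₁ : ℝ) + 1) / (1 - s)⌉₊ + ⌈1 / s⌉₊, fun n hn H hu hf hH => ?_⟩
  have hn₁ : (n₁ : ℝ) + 1 ≤ (1 - s) * n := by
    rw [← div_le_iff₀' (by linarith)]
    exact (Nat.le_ceil _).trans (Nat.cast_le.2 ((Nat.le_add_right _ _).trans hn))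
  have hsn : 1 ≤ s * n := by
    rw [← div_le_iff₀' hs0]
    exact (Nat.le_ceil _).trans (Nat.cast_le.2 ((Nat.le_add_left _ _).trans hn))
  rw [hrp]
  rw [hδs] at hH
  exact card_lowDegreeVertices_le hr (div_nonneg (turanDensity_nonneg r F) (by positivity))
    (turanDensity_div_factorial_mul_le_one r F) hs0 hs1 hex hn₁ hsn hu hf hH
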